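/- arXiv:0812.2659 — 2 statements merged into one kernel-verified Lean document; each statement's English description precedes it below -/
import Mathlib

section
/- Let V, W be subspaces of a finite-dimensional real inner product space with dim V ≤ dim W. Then tr(pr_V ∘ pr_W) = dim V if and only if V ⊆ W. -/
/-!
For an orthonormal basis `b` of `V`, `tr(pr_V ∘ pr_W) = ∑ᵢ ‖pr_W bᵢ‖²`. Each term is at most
`‖bᵢ‖² = 1`, with equality exactly when `bᵢ ∈ W`, so the trace equals `dim V` iff every `bᵢ`
lies in `W`, i.e. iff `V ≤ W`.
-/

noncomputable def proj {E : Type*} [NormedAddCommGroup E] [InnerProductSpace ℝ E]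
    (V : Submodule ℝ E) [V.HasOrthogonalProjection] : E →ₗ[ℝ] E :=
  V.subtype ∘ₗ (V.orthogonalProjectionOnto).toLinearMap

section

open Submodule RealInnerProductSpace

theorem Submodule.le_iff_forall_basis_mem {ι R M : Type*} [Ring R] [AddCommGroup M] [Module R M]
    {V W : Submodule R M} (b : Module.Basis ι R V) : V ≤ W ↔ ∀ i, (b i : M) ∈ W := by
  refine ⟨fun h i => h (b i).2, fun h => ?_⟩
  rw [← V.map_subtype_top, ← b.span_eq, map_span, span_le]
  rintro _ ⟨_, ⟨i, rfl⟩, rfl⟩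
  exact h i

variable {E : Type*} [NormedAddCommGroup E] [InnerProductSpace ℝ E]

theorem proj_apply (V : Submodule ℝ E) [V.HasOrthogonalProjection] (x : E) :
    proj V x = V.starProjection x :=
  rfl

theorem Submodule.real_inner_starProjection_eq_norm_sq (W : Submodule ℝ E)
    [W.HasOrthogonalProjection] (x : E) : ⟪x, W.starProjection x⟫ = ‖W.starProjection x‖ ^ 2 := by
  rw [← real_inner_self_eq_norm_sq, inner_starProjection_left_eq_right,
    starProjection_eq_self_iff.mpr (W.starProjection_apply_mem x)]

theorem sum_norm_sq_starProjection_eq_card_iff {ι : Type*} [Fintype ι] {v : ι → E}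
    (hv : Orthonormal ℝ v) (W : Submodule ℝ E) [W.HasOrthogonalProjection] :
    ∑ i, ‖W.starProjection (v i)‖ ^ 2 = Fintype.card ι ↔ ∀ i, v i ∈ W := by
  have hle : ∀ i ∈ Finset.univ, ‖W.starProjection (v i)‖ ^ 2 ≤ 1 := fun i _ => by
    rw [sq_le_one_iff₀ (norm_nonneg _), ← hv.norm_eq_one i]
    exact W.norm_starProjection_apply_le (v i)
  have hcard : (Fintype.card ι : ℝ) = ∑ _ : ι, (1 : ℝ) := by simp
  rw [hcard, Finset.sum_eq_sum_iff_of_le hle]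
  refine forall_congr' fun i => ?_
  rw [mem_iff_norm_starProjection, hv.norm_eq_one i,
    pow_eq_one_iff_of_nonneg (norm_nonneg _) two_ne_zero]
  simp

theorem trace_proj_comp [FiniteDimensional ℝ E] {ι : Type*} [Fintype ι] (V : Submodule ℝ E)
    (T : E →ₗ[ℝ] E) (b : OrthonormalBasis ι ℝ V) :
    LinearMap.trace ℝ E (proj V ∘ₗ T) = ∑ i, ⟪(b i : E), T (b i)⟫ := by
  rw [proj, LinearMap.comp_assoc, LinearMap.trace_comp_comm', LinearMap.trace_eq_sum_inner _ b]
  simp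

end

theorem stmt_7_general {E : Type*} [NormedAddCommGroup E] [InnerProductSpace ℝ E]
    [FiniteDimensional ℝ E] (V W : Submodule ℝ E) :
    LinearMap.trace ℝ E (proj V ∘ₗ proj W) = (Module.finrank ℝ V : ℝ) ↔ V ≤ W := by
  let b := stdOrthonormalBasis ℝ V
  have htrace : LinearMap.trace ℝ E (proj V ∘ₗ proj W) = ∑ i, ‖W.starProjection (b i)‖ ^ 2 := by
    simp only [trace_proj_comp V _ b, proj_apply, Submodule.real_inner_starProjection_eq_norm_sq]
  have hsum := sum_norm_sq_starProjection_eq_card_iff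
    (b.orthonormal.comp_linearIsometry V.subtypeₗᵢ) W
  rw [Fintype.card_fin] at hsum
  rw [htrace, Submodule.le_iff_forall_basis_mem b.toBasis]
  simpa using hsum

theorem stmt_7 {E : Type*} [NormedAddCommGroup E] [InnerProductSpace ℝ E]
    [FiniteDimensional ℝ E] (V W : Submodule ℝ E)
    (hdim : Module.finrank ℝ V ≤ Module.finrank ℝ W) :
    LinearMap.trace ℝ E (proj V ∘ₗ proj W) = (Module.finrank ℝ V : ℝ) ↔ V ≤ W :=
  stmt_7_general V W
end

section
/- Let Δ be a flag of subspaces V_s ⊆ V_{s−1} ⊆ … ⊆ V_1 of ℝ^n with dim V_i = a_i (so a_1 ≥ … ≥ a_s), and let Π_Δ = Σ_{i=1}^s pr_{V_i}. Then tr(Π_Δ ∘ Π_Δ) = Σ_{i=1}^s (2i−1)·a_i. -/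
/-!
Since `V_j ⊆ V_i` for `i ≤ j`, the composite `pr_{V_i} ∘ pr_{V_j}` (in either order, up to a cyclic
permutation under the trace) is `pr_{V_{max i j}}`, whose trace is `a_{max i j}`. Expanding the square
of `Π_Δ` thus leaves `∑_{i,j} a_{max i j}`, and exactly `2k + 1` pairs `(i, j)` have `max i j = k`.
-/

open Finset

theorem Finset.sum_sum_max {ι M : Type*} [LinearOrder ι] [Fintype ι] [LocallyFiniteOrderBot ι]
    [LocallyFiniteOrderTop ι] [AddCommMonoid M] (f : ι → M) :
    ∑ i, ∑ j, f (max i j) = ∑ k, (#(Iic k) + #(Iio k)) • f k := by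
  have row : ∀ i, ∑ j, f (max i j) = #(Iic i) • f i + ∑ j ∈ Ioi i, f j := by
    intro i
    rw [← sum_filter_add_sum_filter_not univ (· ≤ i)]
    simp only [not_le, filter_ge_eq_Iic, filter_lt_eq_Ioi]
    congr 1
    · rw [← sum_const]
      exact sum_congr rfl fun j hj => by rw [max_eq_left (mem_Iic.mp hj)]
    · exact sum_congr rfl fun j hj => by rw [max_eq_right (mem_Ioi.mp hj).le]
  have upper : ∑ i, ∑ j ∈ Ioi i, f j = ∑ j, #(Iio j) • f j := by
    rw [sum_comm' (t' := univ) (s' := Iio) (fun i j => by simp)]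
    exact sum_congr rfl fun j _ => sum_const _
  simp only [row, sum_add_distrib, upper, add_smul]

section Projections

variable {E : Type*} [NormedAddCommGroup E] [InnerProductSpace ℝ E]

theorem isProj_proj (V : Submodule ℝ E) [V.HasOrthogonalProjection] :
    LinearMap.IsProj V (proj V) :=
  ⟨fun _ => SetLike.coe_mem _, fun _ hx => Submodule.starProjection_eq_self_iff.mpr hx⟩

theorem proj_comp_proj_of_le {V W : Submodule ℝ E} [V.HasOrthogonalProjection]
    [W.HasOrthogonalProjection] (h : W ≤ V) : proj V ∘ₗ proj W = proj W := by
  ext x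
  exact Submodule.starProjection_eq_self_iff.mpr (h (SetLike.coe_mem _))

variable [FiniteDimensional ℝ E]

theorem trace_proj (V : Submodule ℝ E) :
    LinearMap.trace ℝ E (proj V) = Module.finrank ℝ V :=
  (isProj_proj V).trace

theorem trace_proj_comp_proj_of_antitone {ι : Type*} [LinearOrder ι] {V : ι → Submodule ℝ E}
    (hV : Antitone V) (i j : ι) :
    LinearMap.trace ℝ E (proj (V i) ∘ₗ proj (V j)) = Module.finrank ℝ (V (max i j)) := by
  rcases le_total i j with h | h
  · rw [proj_comp_proj_of_le (hV h), trace_proj, max_eq_right h]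
  · rw [LinearMap.trace_comp_comm', proj_comp_proj_of_le (hV h), trace_proj, max_eq_left h]

end Projections

theorem stmt_8 (n s : ℕ) (V : Fin s → Submodule ℝ (EuclideanSpace ℝ (Fin n)))
    (hflag : Antitone V) (a : Fin s → ℕ) (ha : ∀ i, Module.finrank ℝ (V i) = a i) :
    LinearMap.trace ℝ (EuclideanSpace ℝ (Fin n))
        ((∑ i : Fin s, proj (V i)) ∘ₗ (∑ i : Fin s, proj (V i)))
      = ∑ i : Fin s, (2 * (i : ℝ) + 1) * (a i : ℝ) := by
  rw [← Module.End.mul_eq_comp, Fintype.sum_mul_sum, map_sum]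
  simp only [map_sum, Module.End.mul_eq_comp, trace_proj_comp_proj_of_antitone hflag, ha,
    sum_sum_max (fun k => (a k : ℝ)), Fin.card_Iic, Fin.card_Iio, nsmul_eq_mul]
  push_cast
  exact sum_congr rfl fun k _ => by ring
end
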